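/- arXiv:2109.05282 — 2 statements merged into one kernel-verified Lean document; each statement's English description precedes it below -/
import Mathlib

section
/- Let G ∈ C_b^1(ℝ^d, ℝ^d) and let C^1_{T,d} denote continuously differentiable paths from [0,T] to ℝ^d. Define g(t,ω) = ∫_0^t G(ω(r))·dω(r) (a Riemann–Stieltjes integral against the smooth path ω). Then for every (t,ω) ∈ [0,T]×C^1_{T,d} and every τ ∈ [0,t), g is strongly vertically differentiable at (τ,t,ω) with ∂_{ω_τ} g(t,ω) = G(ω(τ)) + ∫_τ^t DG(ω(r)) dω(r). -/
/-!
Only the last integral depends on the perturbation `x`, and its integrand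
`⟪G (ω r + x), ω' r⟫` is differentiable in `x` with derivative `⟪DG (ω r + x) ·, ω' r⟫`.
For `r` in the compact interval of integration and `x` near `0`, the points `ω r + x` stay in
a compact tube around the path, on which the continuous `DG` is bounded; this gives a domination
by a multiple of `‖ω'‖`, so the derivative passes under the integral sign.
-/

open Set MeasureTheory intervalIntegral
open scoped RealInnerProductSpace
noncomputable section

abbrev EV (d : ℕ) := EuclideanSpace ℝ (Fin d)

section ParametricInnerIntegral

variable {E F : Type*} [NormedAddCommGroup E] [InnerProductSpace ℝ E] [NormedAddCommGroup F]

theorem hasFDerivAt_inner_comp_const_add [NormedSpace ℝ F] {G : F → E} {p x : F}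
    (hG : DifferentiableAt ℝ G (p + x)) (w : E) :
    HasFDerivAt (fun y => ⟪G (p + y), w⟫) ((innerSL ℝ w).comp (fderiv ℝ G (p + x))) x := by
  have hGp : HasFDerivAt (fun y => G (p + y)) (fderiv ℝ G (p + x)) x :=
    hG.hasFDerivAt.comp x ((hasFDerivAt_id x).const_add p)
  simpa only [Function.comp_def, innerSL_apply_apply, real_inner_comm w] using
    (innerSL ℝ w).hasFDerivAt.comp x hGp

theorem exists_bound_comp_add_on_uIcc_closedBall [ProperSpace F] {X : Type*}
    [SeminormedAddCommGroup X] {f : F → X} {ω : ℝ → F} (hf : Continuous f)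
    (hω : Continuous ω) (a b : ℝ) (x₀ : F) (ρ : ℝ) :
    ∃ C, ∀ r ∈ uIcc a b, ∀ x ∈ Metric.closedBall x₀ ρ, ‖f (ω r + x)‖ ≤ C := by
  have hK : IsCompact
      ((fun q : ℝ × F => ω q.1 + q.2) '' (uIcc a b ×ˢ Metric.closedBall x₀ ρ)) :=
    (isCompact_uIcc.prod (isCompact_closedBall x₀ ρ)).image (by fun_prop)
  obtain ⟨C, hC⟩ := hK.exists_bound_of_continuousOn hf.continuousOn
  exact ⟨C, fun r hr x hx => hC _ ⟨(r, x), ⟨hr, hx⟩, rfl⟩⟩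

theorem hasFDerivAt_intervalIntegral_inner_comp_add [NormedSpace ℝ F] [ProperSpace F]
    {G : F → E} {ω : ℝ → F} {v : ℝ → E} (hG : ContDiff ℝ 1 G) (hω : Continuous ω)
    (hv : Continuous v) (a b : ℝ) (x₀ : F) :
    HasFDerivAt (fun x => ∫ r in a..b, ⟪G (ω r + x), v r⟫)
      (∫ r in a..b, (innerSL ℝ (v r)).comp (fderiv ℝ G (ω r + x₀))) x₀ := by
  have hGd : Differentiable ℝ G := hG.differentiable one_ne_zero
  have hG' : Continuous (fderiv ℝ G) := hG.continuous_fderiv one_ne_zero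
  obtain ⟨C, hC⟩ := exists_bound_comp_add_on_uIcc_closedBall hG' hω a b x₀ 1
  refine hasFDerivAt_integral_of_dominated_of_fderiv_le
    (F := fun x r => ⟪G (ω r + x), v r⟫)
    (F' := fun x r => (innerSL ℝ (v r)).comp (fderiv ℝ G (ω r + x)))
    (bound := fun r => C * ‖v r‖) (Metric.ball_mem_nhds x₀ one_pos) ?_ ?_ ?_ ?_ ?_ ?_
  · exact .of_forall fun x =>
      (by fun_prop : Continuous fun r => ⟪G (ω r + x), v r⟫).aestronglyMeasurable
  · exact (by fun_prop : Continuous fun r => ⟪G (ω r + x₀), v r⟫).intervalIntegrable a b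
  · exact (by fun_prop : Continuous fun r =>
      (innerSL ℝ (v r)).comp (fderiv ℝ G (ω r + x₀))).aestronglyMeasurable
  · refine .of_forall fun r hr x hx => ?_
    have hDG := hC r (uIoc_subset_uIcc hr) x (Metric.ball_subset_closedBall hx)
    calc ‖(innerSL ℝ (v r)).comp (fderiv ℝ G (ω r + x))‖
        ≤ ‖innerSL ℝ (v r)‖ * ‖fderiv ℝ G (ω r + x)‖ := ContinuousLinearMap.opNorm_comp_le _ _
      _ ≤ ‖v r‖ * C := by
        rw [innerSL_apply_norm]
        exact mul_le_mul_of_nonneg_left hDG (norm_nonneg _)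
      _ = C * ‖v r‖ := mul_comm _ _
  · exact (continuous_const.mul hv.norm).intervalIntegrable a b
  · exact .of_forall fun r _ x _ => hasFDerivAt_inner_comp_const_add (hGd _) (v r)

end ParametricInnerIntegral

theorem stmt_5_general {d : ℕ}
    (G : EV d → EV d) (hG : ContDiff ℝ 1 G)
    (ω : ℝ → EV d) (hω : ContDiff ℝ 1 ω)
    (τ t : ℝ) :
    ∃ D : EV d →L[ℝ] ℝ,
      HasFDerivAt
        (fun x : EV d =>
          (∫ r in (0:ℝ)..τ, ⟪G (ω r), deriv ω r⟫) + ⟪G (ω τ), x⟫ +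
            ∫ r in τ..t, ⟪G (ω r + x), deriv ω r⟫) D 0 ∧
      ∀ v : EV d, D v = ⟪G (ω τ), v⟫ + ∫ r in τ..t, ⟪fderiv ℝ G (ω r) v, deriv ω r⟫ := by
  have hω' : Continuous (deriv ω) := hω.continuous_deriv le_rfl
  have hG' : Continuous (fderiv ℝ G) := hG.continuous_fderiv one_ne_zero
  have hsum := ((hasFDerivAt_const (∫ r in (0:ℝ)..τ, ⟪G (ω r), deriv ω r⟫) 0).add
    (innerSL ℝ (G (ω τ))).hasFDerivAt).add
      (hasFDerivAt_intervalIntegral_inner_comp_add hG hω.continuous hω' τ t 0)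
  rw [zero_add] at hsum
  refine ⟨_, hsum, fun w => ?_⟩
  have hint : IntervalIntegrable
      (fun r => (innerSL ℝ (deriv ω r)).comp (fderiv ℝ G (ω r + 0))) volume τ t :=
    (by fun_prop : Continuous _).intervalIntegrable τ t
  rw [add_apply, ContinuousLinearMap.intervalIntegral_apply hint]
  simp [real_inner_comm]

/-- For `G ∈ C¹_b(ℝ^d,ℝ^d)`, a `C¹` path `ω` and `g(t,ω) = ∫_0^t G(ω(r))·dω(r)`, the
functional `g` is strongly vertically differentiable at every `(τ,t,ω)` with `τ < t`,
where the perturbed integral is interpreted as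
`∫_0^τ G(ω)·dω + G(ω(τ))·x + ∫_τ^t G(ω(r)+x)·dω(r)`, and
`∂_{ω_τ} g(t,ω) = G(ω(τ)) + ∫_τ^t DG(ω(r)) dω(r)`. -/
theorem stmt_5 {d : ℕ} (T : ℝ) (hT : 0 < T)
    (G : EV d → EV d) (hG : ContDiff ℝ 1 G)
    (hGb : ∃ M : ℝ, ∀ x, ‖G x‖ ≤ M ∧ ‖fderiv ℝ G x‖ ≤ M)
    (ω : ℝ → EV d) (hω : ContDiff ℝ 1 ω)
    (τ t : ℝ) (hτ : 0 ≤ τ) (hτt : τ < t) (htT : t ≤ T) :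
    ∃ D : EV d →L[ℝ] ℝ,
      HasFDerivAt
        (fun x : EV d =>
          (∫ r in (0:ℝ)..τ, ⟪G (ω r), deriv ω r⟫) + ⟪G (ω τ), x⟫ +
            ∫ r in τ..t, ⟪G (ω r + x), deriv ω r⟫) D 0 ∧
      ∀ v : EV d, D v = ⟪G (ω τ), v⟫ + ∫ r in τ..t, ⟪fderiv ℝ G (ω r) v, deriv ω r⟫ :=
  stmt_5_general G hG ω hω τ t
end
end

section
/- Let H ∈ C_b^2(ℝ, ℝ^d) and for a C^1 path ω: [0,T]→ℝ^d let x(·) solve the ODE x(t) = ∫_0^t H(x(r))·dω(r). Define φ(t,ω) := x(t). Then φ is strongly vertically differentiable at every (τ,t,ω) with τ ≤ t, and the derivative y(t) := ∂_{ω_τ}φ(t,ω) ∈ ℝ^d solves the linear ODE y(t) = H(x(τ)) + ∫_τ^t y(r) H'(x(r))·dω(r) for t ≥ τ. -/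
open Set MeasureTheory intervalIntegral
open scoped RealInnerProductSpace
noncomputable section

/-!
The state is scalar, so the linearised equation is solved explicitly by
`y s = exp (∫ r in τ..s, g r) • H (x τ)` with `g r = ⟪H' (x r), ω' r⟫`. The perturbation `h` only
enters through the initial value `X h τ = x τ + ⟪H (x τ), h⟫`, so the claim is the
differentiability of the flow of the scalar ODE `u' = ⟪H u, ω'⟫` in its initial value.
Grönwall gives `|X h - x| = O(‖h‖)`; the remainder `X h - x - exp (∫ g) * ⟪H (x τ), h⟫` vanishes
at `τ` and has derivative `g * remainder` plus a second-order Taylor term of `H`, so a second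
application of Grönwall makes it `O(‖h‖²)`.
-/

open Filter Real Topology
open scoped NNReal

section IntegralEquation

variable {E : Type*} [NormedAddCommGroup E] [NormedSpace ℝ E]
  {G : ℝ → E → E} {C a b : ℝ} {c : E} {u : ℝ → E}

/- The junk value `∫ = 0` of a non-integrable integrand is ruled out a posteriori: on the set of
`s` for which `r ↦ G r (u r)` is integrable on `a..s` the solution is Lipschitz, off it the solution
is the constant `c`, so the integrand is measurable and bounded, hence integrable on `a..b`. -/
theorem continuousOn_of_eq_integral (hG : Continuous (Function.uncurry G))
    (hGb : ∀ r ∈ Icc a b, ∀ v, ‖G r v‖ ≤ C)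
    (hu : ∀ s ∈ Icc a b, u s = c + ∫ r in a..s, G r (u r)) :
    ContinuousOn u (Icc a b) := by
  set f : ℝ → E := fun r => G r (u r)
  set A : Set ℝ := {s ∈ Icc a b | IntervalIntegrable f volume a s}
  have hAsub : A ⊆ Icc a b := fun s hs => hs.1
  have hA : A.OrdConnected := ⟨fun s hs s' hs' r hr =>
    ⟨⟨hs.1.1.trans hr.1, hr.2.trans hs'.1.2⟩,
      hs'.2.mono_set (Set.uIcc_subset_uIcc_left (mem_uIcc_of_le (hs.1.1.trans hr.1) hr.2))⟩⟩
  have hlip : LipschitzOnWith C.toNNReal u A := by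
    refine LipschitzOnWith.of_dist_le_mul fun s hs s' hs' => ?_
    rw [dist_eq_norm, Real.dist_eq, hu s hs.1, hu s' hs'.1, add_sub_add_left_eq_sub,
      intervalIntegral.integral_interval_sub_left hs.2 hs'.2, Real.coe_toNNReal']
    exact intervalIntegral.norm_integral_le_of_norm_le_const fun r hr =>
      (hGb r (uIcc_subset_Icc hs'.1 hs.1 (uIoc_subset_uIcc hr)) _).trans (le_max_left _ _)
  have hconst : EqOn u (fun _ => c) (Icc a b \ A) := fun s hs => by
    rw [hu s hs.1, intervalIntegral.integral_undef fun h => hs.2 ⟨hs.1, h⟩, add_zero]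
  have hu_meas : AEStronglyMeasurable u (volume.restrict (Icc a b)) := by
    rw [← union_sdiff_cancel hAsub, aestronglyMeasurable_union_iff]
    exact ⟨hlip.continuousOn.aestronglyMeasurable hA.measurableSet,
      aestronglyMeasurable_const.congr
        (hconst.aeEq_restrict (measurableSet_Icc.diff hA.measurableSet)).symm⟩
  by_cases hab : a ≤ b
  swap
  · simp [Icc_eq_empty hab]
  have hbA : b ∈ A := by
    refine ⟨right_mem_Icc.2 hab, (intervalIntegrable_iff_integrableOn_Icc_of_le hab).2 ?_⟩
    exact Integrable.of_bound
      (hG.comp_aestronglyMeasurable (aestronglyMeasurable_id.prodMk hu_meas))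
      C (ae_restrict_of_forall_mem measurableSet_Icc fun r hr => hGb r hr _)
  exact hlip.continuousOn.mono (hA.out ⟨left_mem_Icc.2 hab, .refl⟩ hbA)

theorem hasDerivWithinAt_Ici_of_eq_integral [CompleteSpace E] {f : ℝ → E}
    (hf : ContinuousOn f (Icc a b)) (hu : ∀ s ∈ Icc a b, u s = c + ∫ r in a..s, f r)
    {t : ℝ} (ht : t ∈ Ico a b) :
    HasDerivWithinAt u (f t) (Ici t) t := by
  have hmem : Icc a b ∈ 𝓝[≥] t := Icc_mem_nhdsGE_of_mem ht
  have hmem' : Icc a b ∈ 𝓝[>] t := nhdsWithin_mono t Ioi_subset_Ici_self hmem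
  have hint : IntervalIntegrable f volume a t :=
    (hf.mono (Icc_subset_Icc_right ht.2.le)).intervalIntegrable_of_Icc ht.1
  have hd := intervalIntegral.integral_hasDerivWithinAt_right hint (s := Ici t)
    ⟨Icc a b, hmem', hf.aestronglyMeasurable measurableSet_Icc⟩
    ((hf.continuousWithinAt (Ico_subset_Icc_self ht)).mono_of_mem_nhdsWithin hmem')
  exact (hd.const_add c).congr_of_eventuallyEq (eventually_of_mem hmem hu)
    (hu t (Ico_subset_Icc_self ht))

theorem continuousOn_and_hasDerivWithinAt_of_eq_integral [CompleteSpace E]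
    (hG : Continuous (Function.uncurry G)) (hGb : ∀ r ∈ Icc a b, ∀ v, ‖G r v‖ ≤ C)
    (hu : ∀ s ∈ Icc a b, u s = c + ∫ r in a..s, G r (u r)) :
    ContinuousOn u (Icc a b) ∧ ∀ t ∈ Ico a b, HasDerivWithinAt u (G t (u t)) (Ici t) t := by
  have hcont := continuousOn_of_eq_integral hG hGb hu
  exact ⟨hcont, fun t => hasDerivWithinAt_Ici_of_eq_integral
    (hG.comp_continuousOn (continuousOn_id.prodMk hcont)) hu⟩

end IntegralEquation

section LinearEquation

variable {g : ℝ → ℝ} {a b : ℝ}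

theorem continuousOn_exp_integral (hg : ContinuousOn g (Icc a b)) (hab : a ≤ b) :
    ContinuousOn (fun s => exp (∫ r in a..s, g r)) (Icc a b) := by
  rw [← uIcc_of_le hab] at hg ⊢
  exact continuous_exp.comp_continuousOn
    (intervalIntegral.continuousOn_primitive_interval (hg.integrableOn_compact isCompact_uIcc))

theorem hasDerivWithinAt_exp_integral (hg : ContinuousOn g (Icc a b)) {t : ℝ}
    (ht : t ∈ Ico a b) :
    HasDerivWithinAt (fun s => exp (∫ r in a..s, g r)) (exp (∫ r in a..t, g r) * g t)
      (Ici t) t :=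
  (hasDerivWithinAt_Ici_of_eq_integral (c := 0) hg (fun _ _ => (zero_add _).symm) ht).exp

theorem exp_integral_smul_eq {E : Type*} [NormedAddCommGroup E] [NormedSpace ℝ E]
    [CompleteSpace E] (hg : ContinuousOn g (Icc a b)) (v : E) {s : ℝ} (hs : s ∈ Icc a b) :
    exp (∫ r in a..s, g r) • v = v + ∫ r in a..s, g r • exp (∫ r' in a..r, g r') • v := by
  have hg' : ContinuousOn g (Icc a s) := hg.mono (Icc_subset_Icc_right hs.2)
  have hftc : ∫ r in a..s, exp (∫ r' in a..r, g r') * g r = exp (∫ r in a..s, g r) - 1 := by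
    rw [intervalIntegral.integral_eq_sub_of_hasDeriv_right_of_le hs.1
      (continuousOn_exp_integral hg' hs.1)
      (fun t ht => (hasDerivWithinAt_exp_integral hg' (Ioo_subset_Ico_self ht)).mono
        Ioi_subset_Ici_self)
      (((continuousOn_exp_integral hg' hs.1).mul hg').intervalIntegrable_of_Icc hs.1),
      intervalIntegral.integral_same, exp_zero]
  simp_rw [smul_smul, intervalIntegral.integral_smul_const, mul_comm (g _), hftc, sub_smul,
    one_smul]
  abel

end LinearEquation

theorem gronwallBound_zero_mul (K c ε x : ℝ) :
    gronwallBound 0 K (c * ε) x = c * gronwallBound 0 K ε x := by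
  unfold gronwallBound
  split_ifs <;> ring

theorem hasFDerivAt_of_norm_sub_le_mul_sq {𝕜 E F : Type*} [NontriviallyNormedField 𝕜]
    [NormedAddCommGroup E] [NormedSpace 𝕜 E] [NormedAddCommGroup F] [NormedSpace 𝕜 F]
    {f : E → F} {f' : E →L[𝕜] F} {x : E} (C : ℝ)
    (hf : ∀ h, ‖f (x + h) - f x - f' h‖ ≤ C * ‖h‖ ^ 2) : HasFDerivAt f f' x := by
  rw [hasFDerivAt_iff_isLittleO_nhds_zero]
  refine Asymptotics.IsBigO.trans_isLittleO ?_ (Asymptotics.isLittleO_norm_pow_id one_lt_two)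
  refine Asymptotics.IsBigO.of_bound C (Eventually.of_forall fun h => ?_)
  rw [norm_pow, norm_norm]
  exact hf h

section ScalarODE

variable {F : ℝ → ℝ → ℝ} {g E u v : ℝ → ℝ} {τ T : ℝ}

theorem abs_sub_sub_mul_le_gronwallBound {L ε : ℝ}
    (hFg : ∀ t ∈ Ico τ T, |F t (v t) - F t (u t) - (v t - u t) * g t| ≤ ε)
    (hgL : ∀ t ∈ Ico τ T, |g t| ≤ L)
    (hu : ContinuousOn u (Icc τ T))
    (hu' : ∀ t ∈ Ico τ T, HasDerivWithinAt u (F t (u t)) (Ici t) t)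
    (hv : ContinuousOn v (Icc τ T))
    (hv' : ∀ t ∈ Ico τ T, HasDerivWithinAt v (F t (v t)) (Ici t) t)
    (hE : ContinuousOn E (Icc τ T))
    (hE' : ∀ t ∈ Ico τ T, HasDerivWithinAt E (E t * g t) (Ici t) t) (hE1 : E τ = 1) :
    ∀ t ∈ Icc τ T, |v t - u t - E t * (v τ - u τ)| ≤ gronwallBound 0 L ε (t - τ) := by
  refine norm_le_gronwallBound_of_norm_deriv_right_le
    ((hv.sub hu).sub (hE.mul continuousOn_const))
    (fun t ht => ((hv' t ht).sub (hu' t ht)).sub ((hE' t ht).mul_const _))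
    (by simp [hE1]) fun t ht => ?_
  set R := v t - u t - E t * (v τ - u τ)
  have hsplit : F t (v t) - F t (u t) - E t * g t * (v τ - u τ)
      = (F t (v t) - F t (u t) - (v t - u t) * g t) + g t * R := by ring
  rw [hsplit, Real.norm_eq_abs, Real.norm_eq_abs]
  calc _ ≤ ε + |g t| * |R| := (abs_add_le _ _).trans (by rw [abs_mul]; gcongr; exact hFg t ht)
    _ ≤ L * |R| + ε := by nlinarith [hgL t ht, abs_nonneg R]

theorem hasFDerivAt_solution_initialValue {Φ : Type*} [NormedAddCommGroup Φ] [NormedSpace ℝ Φ]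
    {L Q : ℝ≥0} {U : Φ → ℝ → ℝ} {ℓ : Φ →L[ℝ] ℝ}
    (hF : ∀ t ∈ Ico τ T, LipschitzWith L (F t))
    (hFg : ∀ t ∈ Ico τ T, ∀ p, |F t p - F t (u t) - (p - u t) * g t| ≤ Q * |p - u t| ^ 2)
    (hg : ContinuousOn g (Icc τ T)) (hgL : ∀ t ∈ Ico τ T, |g t| ≤ L)
    (hu : ContinuousOn u (Icc τ T))
    (hu' : ∀ t ∈ Ico τ T, HasDerivWithinAt u (F t (u t)) (Ici t) t)
    (hU : ∀ h, ContinuousOn (U h) (Icc τ T))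
    (hU' : ∀ h, ∀ t ∈ Ico τ T, HasDerivWithinAt (U h) (F t (U h t)) (Ici t) t)
    (hUτ : ∀ h, U h τ = u τ + ℓ h) {s : ℝ} (hs : s ∈ Icc τ T) :
    HasFDerivAt (fun h => U h s) (exp (∫ r in τ..s, g r) • ℓ) 0 := by
  have hτT : τ ≤ T := hs.1.trans hs.2
  set D : ℝ := ‖ℓ‖ * exp (L * (T - τ))
  have hstab : ∀ h, ∀ t ∈ Icc τ T, |U h t - u t| ≤ D * ‖h‖ := by
    intro h t ht
    have hτ : dist (U h τ) (u τ) ≤ ‖ℓ‖ * ‖h‖ := by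
      rw [Real.dist_eq, hUτ, add_sub_cancel_left, ← Real.norm_eq_abs]
      exact ℓ.le_opNorm h
    have := dist_le_of_trajectories_ODE_of_mem (s := fun _ => univ)
      (fun t ht => (hF t ht).lipschitzOnWith) (hU h) (hU' h) (fun _ _ => mem_univ _)
      hu hu' (fun _ _ => mem_univ _) hτ t ht
    rw [Real.dist_eq] at this
    calc _ ≤ ‖ℓ‖ * ‖h‖ * exp (L * (t - τ)) := this
      _ ≤ ‖ℓ‖ * ‖h‖ * exp (L * (T - τ)) := by gcongr; exact ht.2
      _ = D * ‖h‖ := by ring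
  have hU0 : U 0 s = u s := by simpa [sub_eq_zero] using hstab 0 s hs
  refine hasFDerivAt_of_norm_sub_le_mul_sq (gronwallBound 0 L (Q * D ^ 2) (s - τ)) fun h => ?_
  have hrem := abs_sub_sub_mul_le_gronwallBound (ε := ‖h‖ ^ 2 * (Q * D ^ 2)) (fun t ht => ?_)
    hgL hu hu' (hU h) (hU' h) (continuousOn_exp_integral hg hτT)
    (fun t ht => hasDerivWithinAt_exp_integral hg ht) (by simp) s hs
  · rw [gronwallBound_zero_mul, hUτ, add_sub_cancel_left] at hrem
    simpa [hU0, mul_comm] using hrem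
  · calc _ ≤ Q * |U h t - u t| ^ 2 := hFg t ht _
      _ ≤ Q * (D * ‖h‖) ^ 2 := by gcongr; exact hstab h t (Ico_subset_Icc_self ht)
      _ = ‖h‖ ^ 2 * (Q * D ^ 2) := by ring

end ScalarODE

section TaylorBounds

variable {V : Type*} [NormedAddCommGroup V] [NormedSpace ℝ V] {f : ℝ → V} {M : ℝ}

theorem norm_sub_le_of_norm_deriv_le (hf : Differentiable ℝ f) (hM : ∀ z, ‖deriv f z‖ ≤ M)
    (p q : ℝ) : ‖f p - f q‖ ≤ M * |p - q| := by
  simpa [Real.norm_eq_abs] using Convex.norm_image_sub_le_of_norm_deriv_le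
    (fun z _ => hf z) (fun z _ => hM z) convex_univ (mem_univ q) (mem_univ p)

theorem norm_sub_sub_smul_deriv_le (hf : Differentiable ℝ f) (hf' : Differentiable ℝ (deriv f))
    (hM : ∀ z, ‖deriv (deriv f) z‖ ≤ M) (p q : ℝ) :
    ‖f p - f q - (p - q) • deriv f q‖ ≤ M * |p - q| ^ 2 := by
  have hφ : ∀ z, HasDerivAt (fun z => f z - z • deriv f q) (deriv f z - deriv f q) z :=
    fun z => by simpa using (hf z).hasDerivAt.fun_sub ((hasDerivAt_id' z).smul_const _)
  have hbound : ∀ z ∈ uIcc q p, ‖deriv f z - deriv f q‖ ≤ M * |p - q| := fun z hz =>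
    (norm_sub_le_of_norm_deriv_le hf' hM z q).trans
      (mul_le_mul_of_nonneg_left (abs_sub_left_of_mem_uIcc hz) ((norm_nonneg _).trans (hM 0)))
  have := Convex.norm_image_sub_le_of_norm_hasDerivWithin_le
    (fun z _ => (hφ z).hasDerivWithinAt) hbound (convex_uIcc q p) left_mem_uIcc right_mem_uIcc
  rw [Real.norm_eq_abs, mul_assoc, ← sq] at this
  convert this using 2
  simp only [sub_smul]
  abel

end TaylorBounds

section InnerField

variable {V : Type*} [NormedAddCommGroup V] [InnerProductSpace ℝ V] {H : ℝ → V}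
  {M K : ℝ≥0} {w : V}

theorem lipschitzWith_inner_left (hH : Differentiable ℝ H) (hM : ∀ z, ‖deriv H z‖ ≤ M)
    (hw : ‖w‖ ≤ K) : LipschitzWith (M * K) fun p => ⟪H p, w⟫ := by
  refine LipschitzWith.of_dist_le_mul fun p q => ?_
  rw [Real.dist_eq, Real.dist_eq, ← inner_sub_left, NNReal.coe_mul]
  calc _ ≤ ‖H p - H q‖ * ‖w‖ := abs_real_inner_le_norm _ _
    _ ≤ M * |p - q| * K := by gcongr; exact norm_sub_le_of_norm_deriv_le hH hM p q
    _ = _ := by ring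

theorem abs_inner_sub_sub_le (hH : Differentiable ℝ H) (hH' : Differentiable ℝ (deriv H))
    (hM : ∀ z, ‖deriv (deriv H) z‖ ≤ M) (hw : ‖w‖ ≤ K) (p q : ℝ) :
    |⟪H p, w⟫ - ⟪H q, w⟫ - (p - q) * ⟪deriv H q, w⟫| ≤ M * K * |p - q| ^ 2 := by
  rw [← inner_sub_left, ← real_inner_smul_left, ← inner_sub_left]
  calc _ ≤ ‖H p - H q - (p - q) • deriv H q‖ * ‖w‖ := abs_real_inner_le_norm _ _
    _ ≤ M * |p - q| ^ 2 * K := by gcongr; exact norm_sub_sub_smul_deriv_le hH hH' hM p q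
    _ = _ := by ring

end InnerField

theorem stmt_6_general {d : ℕ} (T : ℝ)
    (H : ℝ → EV d) (hH : ContDiff ℝ 2 H)
    (hHb : ∃ M : ℝ, ∀ u : ℝ, ‖H u‖ ≤ M ∧ ‖deriv H u‖ ≤ M ∧ ‖deriv (deriv H) u‖ ≤ M)
    (ω : ℝ → EV d) (hω : ContDiff ℝ 1 ω)
    (τ : ℝ) (hτ : 0 ≤ τ) (hτT : τ ≤ T)
    (x : ℝ → ℝ)
    (hx : ∀ s ∈ Icc (0:ℝ) T, x s = ∫ r in (0:ℝ)..s, ⟪H (x r), deriv ω r⟫)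
    (X : EV d → ℝ → ℝ)
    (hXeq : ∀ (h : EV d), ∀ s ∈ Icc τ T,
      X h s = x τ + ⟪H (x τ), h⟫ + ∫ r in τ..s, ⟪H (X h r), deriv ω r⟫) :
    ∃ y : ℝ → EV d,
      (∀ s ∈ Icc τ T,
        y s = H (x τ) + ∫ r in τ..s, (⟪deriv H (x r), deriv ω r⟫ : ℝ) • y r) ∧
      ∀ s ∈ Icc τ T, HasFDerivAt (fun h : EV d => X h s) (innerSL ℝ (y s)) 0 := by
  obtain ⟨M, hM⟩ := hHb
  lift M to ℝ≥0 using (norm_nonneg _).trans (hM 0).1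
  have hωc : Continuous (deriv ω) := hω.continuous_deriv le_rfl
  obtain ⟨K, hK⟩ : ∃ K : ℝ≥0, ∀ r ∈ Icc 0 T, ‖deriv ω r‖ ≤ K := by
    obtain ⟨K, hK⟩ := isCompact_Icc.exists_bound_of_continuousOn hωc.continuousOn
    exact ⟨K.toNNReal, fun r hr => (hK r hr).trans (le_coe_toNNReal K)⟩
  have hIcc : Icc τ T ⊆ Icc 0 T := Icc_subset_Icc_left hτ
  have hKτ : ∀ t ∈ Ico τ T, ‖deriv ω t‖ ≤ K := fun t ht => hK t (hIcc (Ico_subset_Icc_self ht))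
  have hinner : ∀ (a : EV d) r, ‖a‖ ≤ M → ‖deriv ω r‖ ≤ K → |⟪a, deriv ω r⟫| ≤ M * K :=
    fun a r ha hr => (abs_real_inner_le_norm _ _).trans (mul_le_mul ha hr (norm_nonneg _) M.2)
  have hHd : Differentiable ℝ H := hH.differentiable two_ne_zero
  have hH' : ContDiff ℝ 1 (deriv H) := hH.iterate_deriv' 1 1
  set F : ℝ → ℝ → ℝ := fun r p => ⟪H p, deriv ω r⟫
  have hFc : Continuous (Function.uncurry F) :=
    (hH.continuous.comp continuous_snd).inner (hωc.comp continuous_fst)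
  have hFb : ∀ r ∈ Icc 0 T, ∀ p, ‖F r p‖ ≤ M * K := fun r hr p => hinner _ r (hM p).1 (hK r hr)
  obtain ⟨hxc, hx'⟩ := continuousOn_and_hasDerivWithinAt_of_eq_integral hFc hFb (c := 0)
    (by simpa using hx)
  have hX := fun h => continuousOn_and_hasDerivWithinAt_of_eq_integral hFc
    (fun r hr => hFb r (hIcc hr)) (hXeq h)
  set g : ℝ → ℝ := fun r => ⟪deriv H (x r), deriv ω r⟫
  have hgc : ContinuousOn g (Icc τ T) :=
    ((hH'.continuous.comp_continuousOn hxc).inner hωc.continuousOn).mono hIcc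
  refine ⟨fun s => exp (∫ r in τ..s, g r) • H (x τ), fun s hs => exp_integral_smul_eq hgc _ hs,
    fun s hs => ?_⟩
  rw [map_smulₛₗ]
  exact hasFDerivAt_solution_initialValue (L := M * K) (Q := M * K)
    (fun t ht => lipschitzWith_inner_left hHd (fun z => (hM z).2.1) (hKτ t ht))
    (fun t ht p => abs_inner_sub_sub_le hHd (hH'.differentiable one_ne_zero)
      (fun z => (hM z).2.2) (hKτ t ht) p (x t))
    hgc (fun t ht => hinner _ t (hM _).2.1 (hKτ t ht))
    (hxc.mono hIcc) (fun t ht => hx' t (Ico_subset_Ico_left hτ ht))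
    (fun h => (hX h).1) (fun h => (hX h).2)
    (fun h => by simp [hXeq h τ (left_mem_Icc.2 hτT)]) hs

/-- Let `H ∈ C²_b(ℝ, ℝ^d)`, `ω` a `C¹` path and let `x` solve `x(t) = ∫_0^t H(x(r))·dω(r)`.
Let `X h` be the solution driven by the perturbed path `ω + h·1_{[τ,T]}` (the jump at `τ`
contributing `H(x(τ))·h`).  Then `φ(t,ω) := x(t)` is strongly vertically differentiable at
every `(τ,t,ω)` with `τ ≤ t`, with derivative `y(t) = ∂_{ω_τ}φ(t,ω)` solving the linear ODE
`y(t) = H(x(τ)) + ∫_τ^t y(r) H'(x(r))·dω(r)` for `t ≥ τ`. -/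
theorem stmt_6 {d : ℕ} (T : ℝ) (hT : 0 < T)
    (H : ℝ → EV d) (hH : ContDiff ℝ 2 H)
    (hHb : ∃ M : ℝ, ∀ u : ℝ, ‖H u‖ ≤ M ∧ ‖deriv H u‖ ≤ M ∧ ‖deriv (deriv H) u‖ ≤ M)
    (ω : ℝ → EV d) (hω : ContDiff ℝ 1 ω)
    (τ : ℝ) (hτ : 0 ≤ τ) (hτT : τ ≤ T)
    (x : ℝ → ℝ)
    (hx : ∀ s ∈ Icc (0:ℝ) T, x s = ∫ r in (0:ℝ)..s, ⟪H (x r), deriv ω r⟫)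
    (X : EV d → ℝ → ℝ)
    (hXpast : ∀ (h : EV d) (s : ℝ), s < τ → X h s = x s)
    (hXeq : ∀ (h : EV d), ∀ s ∈ Icc τ T,
      X h s = x τ + ⟪H (x τ), h⟫ + ∫ r in τ..s, ⟪H (X h r), deriv ω r⟫) :
    ∃ y : ℝ → EV d,
      (∀ s ∈ Icc τ T,
        y s = H (x τ) + ∫ r in τ..s, (⟪deriv H (x r), deriv ω r⟫ : ℝ) • y r) ∧
      ∀ s ∈ Icc τ T, HasFDerivAt (fun h : EV d => X h s) (innerSL ℝ (y s)) 0 :=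
  stmt_6_general T H hH hHb ω hω τ hτ hτT x hx X hXeq
end
end
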